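/- Let G be a compact topological group, let H be a nonzero complex Hilbert space, and let π be a strongly continuous unitary representation of G on H (each π(g) is a unitary operator, π(gh) = π(g)π(h), π(e) = id, and g ↦ π(g)v is continuous for each v ∈ H). If π is irreducible, i.e. the only closed subspaces S ⊆ H with π(g)S ⊆ S for all g ∈ G are {0} and H, then H is finite-dimensional. -/

import Mathlib

/-!
Average the rank-one operators `|π g v⟩⟨π g v|` over Haar probability measure, for some `v ≠ 0`.
The resulting operator `T` is self-adjoint, nonzero since `⟪v, T v⟫ = ∫ |⟪π g v, v⟫|² dg > 0`,
compact since it maps the unit ball into the closed convex hull of the compact set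
`{c • π g v : ‖c‖ ≤ ‖v‖}`, and commutes with `π` by invariance of Haar measure.
By the spectral theory of compact self-adjoint operators, `T` has a nonzero eigenvalue whose
eigenspace is finite-dimensional; that eigenspace is closed and `π`-invariant, hence all of `H`.
-/

open MeasureTheory Module End
open scoped InnerProductSpace

section FrameOperator

variable {𝕜 X H : Type*} [RCLike 𝕜] [NormedAddCommGroup H] [InnerProductSpace 𝕜 H]
  [TopologicalSpace X] [MeasurableSpace X] [CompactSpace X] [OpensMeasurableSpace X]
  {μ : Measure X} [IsFiniteMeasure μ] {f : X → H}

theorem Continuous.integrable_innerSL_smulRight (hf : Continuous f) :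
    Integrable (fun x ↦ (innerSL 𝕜 (f x)).smulRight (f x)) μ :=
  (isBoundedBilinearMap_smulRight.continuous.comp
    (((innerSL 𝕜).continuous.comp hf).prodMk hf)).integrable_of_hasCompactSupport
    (.of_compactSpace _)

variable [NormedSpace ℝ H] [IsScalarTower ℝ 𝕜 H]

variable (𝕜 μ f) in
noncomputable def frameOperator : H →L[𝕜] H :=
  ∫ x, (innerSL 𝕜 (f x)).smulRight (f x) ∂μ

theorem frameOperator_apply (hf : Continuous f) (y : H) :
    frameOperator 𝕜 μ f y = ∫ x, ⟪f x, y⟫_𝕜 • f x ∂μ := by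
  rw [frameOperator, ContinuousLinearMap.integral_apply hf.integrable_innerSL_smulRight]
  simp

variable [CompleteSpace H]

theorem inner_frameOperator (hf : Continuous f) (y z : H) :
    ⟪y, frameOperator 𝕜 μ f z⟫_𝕜 = ∫ x, ⟪f x, z⟫_𝕜 * ⟪y, f x⟫_𝕜 ∂μ := by
  rw [frameOperator_apply hf, ← integral_inner ?_ y]
  · simp [inner_smul_right]
  · simpa using (hf.integrable_innerSL_smulRight (𝕜 := 𝕜) (μ := μ)).apply_continuousLinearMap z

theorem isSymmetric_frameOperator (hf : Continuous f) :
    (frameOperator 𝕜 μ f : H →ₗ[𝕜] H).IsSymmetric := by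
  intro y z
  simp only [ContinuousLinearMap.coe_coe]
  rw [← inner_conj_symm, inner_frameOperator hf, inner_frameOperator hf, ← integral_conj]
  congr 1 with x
  simp only [map_mul, inner_conj_symm, mul_comm]

theorem re_inner_frameOperator_self (hf : Continuous f) (y : H) :
    RCLike.re ⟪y, frameOperator 𝕜 μ f y⟫_𝕜 = ∫ x, ‖⟪f x, y⟫_𝕜‖ ^ 2 ∂μ := by
  rw [inner_frameOperator hf, ← integral_re]
  · congr 1 with x
    rw [← inner_conj_symm y, RCLike.mul_conj]
    norm_cast
  · exact ((hf.inner continuous_const).mul (continuous_const.inner hf))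
      |>.integrable_of_hasCompactSupport (.of_compactSpace _)

theorem frameOperator_ne_zero [μ.IsOpenPosMeasure] (hf : Continuous f) {x₀ : X} (hx₀ : f x₀ ≠ 0) :
    frameOperator 𝕜 μ f ≠ 0 := by
  intro h0
  have hpos : 0 < ∫ x, ‖⟪f x, f x₀⟫_𝕜‖ ^ 2 ∂μ :=
    (continuous_norm.comp (hf.inner continuous_const)).pow 2
      |>.integral_pos_of_hasCompactSupport_nonneg_nonzero (.of_compactSpace _)
      (fun _ ↦ sq_nonneg _) (x := x₀) (by simpa using hx₀)
  simp [← re_inner_frameOperator_self hf, h0] at hpos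

theorem isCompactOperator_frameOperator [IsProbabilityMeasure μ] (hf : Continuous f) :
    IsCompactOperator (frameOperator 𝕜 μ f) := by
  obtain ⟨R, hR⟩ := (isCompact_range hf).isBounded.exists_norm_le
  set D : Set H := (fun p : 𝕜 × X ↦ p.1 • f p.2) '' (Metric.closedBall 0 R ×ˢ Set.univ)
  have hD : IsCompact D := ((isCompact_closedBall 0 R).prod isCompact_univ).image (by fun_prop)
  refine (isCompactOperator_iff_image_closedBall_subset_compact
    (frameOperator 𝕜 μ f : H →ₗ[𝕜] H) one_pos).mpr ⟨closedConvexHull ℝ D, ?_, ?_⟩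
  · rw [closedConvexHull_eq_closure_convexHull]
    exact (totallyBounded_convexHull.mpr hD.totallyBounded).closure.isCompact_of_isClosed
      isClosed_closure
  · rintro _ ⟨y, hy, rfl⟩
    have hcoeff (x : X) : ‖⟪f x, y⟫_𝕜‖ ≤ R := calc
      ‖⟪f x, y⟫_𝕜‖ ≤ ‖f x‖ * ‖y‖ := norm_inner_le_norm _ _
      _ ≤ ‖f x‖ := mul_le_of_le_one_right (norm_nonneg _) (mem_closedBall_zero_iff.mp hy)
      _ ≤ R := hR _ ⟨x, rfl⟩
    rw [ContinuousLinearMap.coe_coe, frameOperator_apply hf]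
    refine convex_closedConvexHull.integral_mem isClosed_closedConvexHull
      (.of_forall fun x ↦ subset_closedConvexHull ⟨(⟪f x, y⟫_𝕜, x), ⟨?_, trivial⟩, rfl⟩) ?_
    · simpa using hcoeff x
    · exact (hf.integrable_innerSL_smulRight (𝕜 := 𝕜) (μ := μ)).apply_continuousLinearMap y

end FrameOperator

section Group

variable {𝕜 G H : Type*} [RCLike 𝕜] [NormedAddCommGroup H] [InnerProductSpace 𝕜 H]
  [NormedSpace ℝ H] [IsScalarTower ℝ 𝕜 H] [CompleteSpace H]
  [Group G] [TopologicalSpace G] [CompactSpace G] [MeasurableSpace G] [OpensMeasurableSpace G]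
  [MeasurableMul G] {μ : Measure G} [IsFiniteMeasure μ] [μ.IsMulLeftInvariant] {f : G → H}

theorem map_frameOperator_of_map_mul (hf : Continuous f) (s : G) (U : H →ₗᵢ[𝕜] H)
    (hU : ∀ g, f (s * g) = U (f g)) (y : H) :
    U (frameOperator 𝕜 μ f y) = frameOperator 𝕜 μ f (U y) := calc
  U (frameOperator 𝕜 μ f y) = ∫ g, U.toContinuousLinearMap (⟪f g, y⟫_𝕜 • f g) ∂μ := by
    rw [frameOperator_apply hf, ContinuousLinearMap.integral_comp_comm]
    · rfl
    · simpa using (hf.integrable_innerSL_smulRight (𝕜 := 𝕜) (μ := μ)).apply_continuousLinearMap y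
  _ = ∫ g, ⟪f (s * g), U y⟫_𝕜 • f (s * g) ∂μ := by
    congr 1 with g
    simp [hU]
  _ = frameOperator 𝕜 μ f (U y) := by
    rw [integral_mul_left_eq_self (fun g ↦ ⟪f g, U y⟫_𝕜 • f g) s, frameOperator_apply hf]

end Group

theorem finiteDimensional_of_irreducible_of_isCompactOperator {𝕜 H ι : Type*} [RCLike 𝕜]
    [NormedAddCommGroup H] [InnerProductSpace 𝕜 H] [CompleteSpace H] (ρ : ι → H →ₗ[𝕜] H)
    (hirr : ∀ S : Submodule 𝕜 H, IsClosed (S : Set H) →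
      (∀ i, ∀ v ∈ S, ρ i v ∈ S) → S = ⊥ ∨ S = ⊤)
    {T : H →L[𝕜] H} (hT : IsCompactOperator T) (hTsymm : (T : H →ₗ[𝕜] H).IsSymmetric)
    (hT0 : T ≠ 0) (hcomm : ∀ i y, ρ i (T y) = T (ρ i y)) :
    FiniteDimensional 𝕜 H := by
  obtain ⟨c, hc, hc0⟩ : ∃ c, HasEigenvalue (T : End 𝕜 H) c ∧ c ≠ 0 := by
    by_contra! h
    exact hT0 ((T.eq_zero_of_forall_hasEigenvalue_eq_zero hT hTsymm).mp h)
  have hinv : ∀ i, ∀ v ∈ eigenspace (T : End 𝕜 H) c, ρ i v ∈ eigenspace (T : End 𝕜 H) c := by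
    intro i v hv
    rw [mem_eigenspace_iff] at hv ⊢
    simp only [ContinuousLinearMap.coe_coe] at hv ⊢
    rw [← hcomm, hv, map_smul]
  have htop : eigenspace (T : End 𝕜 H) c = ⊤ :=
    (hirr _ (T.isClosed_eigenspace c) hinv).resolve_left hc
  have := T.finite_dimensional_eigenspace hT c hc0
  rw [htop] at this
  exact Submodule.topEquiv.finiteDimensional

theorem exists_isHaarMeasure_isProbabilityMeasure (G : Type*) [Group G] [TopologicalSpace G]
    [IsTopologicalGroup G] [CompactSpace G] [MeasurableSpace G] [BorelSpace G] :
    ∃ μ : Measure G, μ.IsHaarMeasure ∧ IsProbabilityMeasure μ :=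
  ⟨Measure.haarMeasure ⊤, inferInstance, ⟨Measure.haarMeasure_self⟩⟩

/-- An irreducible strongly continuous unitary representation of a compact
topological group on a nonzero complex Hilbert space is finite-dimensional. -/
theorem irreducible_unitary_rep_of_compact_group_is_finite_dimensional
    {G : Type*} [Group G] [TopologicalSpace G] [IsTopologicalGroup G] [CompactSpace G]
    {H : Type*} [NormedAddCommGroup H] [InnerProductSpace ℂ H] [CompleteSpace H]
    [Nontrivial H]
    (π : G →* (H ≃ₗᵢ[ℂ] H))
    (hcont : ∀ v : H, Continuous fun g : G => π g v)
    (hirr : ∀ S : Submodule ℂ H, IsClosed (S : Set H) →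
      (∀ g : G, ∀ v ∈ S, π g v ∈ S) → S = ⊥ ∨ S = ⊤) :
    FiniteDimensional ℂ H := by
  borelize G
  obtain ⟨μ, _, _⟩ := exists_isHaarMeasure_isProbabilityMeasure G
  obtain ⟨v, hv⟩ := exists_ne (0 : H)
  have horbit (s g : G) : π (s * g) v = (π s).toLinearIsometry (π g v) := by simp
  exact finiteDimensional_of_irreducible_of_isCompactOperator
    (fun g ↦ (π g).toLinearEquiv.toLinearMap) hirr (isCompactOperator_frameOperator (μ := μ) (hcont v))
    (isSymmetric_frameOperator (hcont v))
    (frameOperator_ne_zero (hcont v) (x₀ := 1) (by simpa using hv))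
    (fun s ↦ map_frameOperator_of_map_mul (hcont v) s _ (horbit s))
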